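/- arXiv:2405.00369 — 2 statements merged into one kernel-verified Lean document; each statement's English description precedes it below -/
import Mathlib

section
/- Let 0 < α < 1. For 3/4 < t < 1 and x_n > 0 with x_n² < 1-t, define I₂ = ∫_0^{1-t} s^{-α} exp(-x_n²/(4s)) ds. Then there exists c > 1 depending only on α such that c^{-1}(1-t)^{1-α} ≤ I₂ ≤ c(1-t)^{1-α}. -/
/-!
On `[(1-t)/2, 1-t]` the hypothesis `xn² < 1 - t` gives `xn²/(4s) ≤ 1/2`, so the Gaussian factor
is at least `exp (-1/2)` there and the integral is at least `(1-t)/2 · (1-t)^(-α) · exp (-1/2)`.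
Above, the Gaussian factor is at most `1` and `∫₀^L s^(-α) ds = L^(1-α)/(1-α)`.
-/

open Real intervalIntegral MeasureTheory

section HeatKernelTimeIntegral

variable {α a L : ℝ}

lemma exp_neg_div_four_mul_le_one (ha : 0 ≤ a) {s : ℝ} (hs : 0 ≤ s) :
    exp (-a / (4 * s)) ≤ 1 :=
  exp_le_one_iff.2 (div_nonpos_of_nonpos_of_nonneg (neg_nonpos.2 ha) (by positivity))

lemma rpow_neg_mul_exp_le_rpow_neg (ha : 0 ≤ a) {s : ℝ} (hs : 0 ≤ s) :
    s ^ (-α) * exp (-a / (4 * s)) ≤ s ^ (-α) :=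
  mul_le_of_le_one_right (rpow_nonneg hs _) (exp_neg_div_four_mul_le_one ha hs)

lemma intervalIntegrable_rpow_neg_mul_exp (hα : α < 1) (ha : 0 ≤ a) (hL : 0 ≤ L) :
    IntervalIntegrable (fun s ↦ s ^ (-α) * exp (-a / (4 * s))) volume 0 L := by
  refine (intervalIntegrable_rpow' (by linarith : (-1 : ℝ) < -α)).mono_fun
    (by fun_prop : Measurable _).aestronglyMeasurable ?_
  rw [Filter.EventuallyLE, ae_restrict_iff' measurableSet_uIoc]
  refine Filter.Eventually.of_forall fun s hs ↦ ?_
  rw [Set.uIoc_of_le hL] at hs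
  have hs0 : 0 ≤ s ^ (-α) := rpow_nonneg hs.1.le _
  rw [norm_of_nonneg (mul_nonneg hs0 (exp_nonneg _)), norm_of_nonneg hs0]
  exact rpow_neg_mul_exp_le_rpow_neg ha hs.1.le

lemma integral_rpow_neg_mul_exp_le (hα : α < 1) (ha : 0 ≤ a) (hL : 0 ≤ L) :
    ∫ s in (0 : ℝ)..L, s ^ (-α) * exp (-a / (4 * s)) ≤ L ^ (1 - α) / (1 - α) := by
  have hα' : (-1 : ℝ) < -α := by linarith
  calc ∫ s in (0 : ℝ)..L, s ^ (-α) * exp (-a / (4 * s))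
      ≤ ∫ s in (0 : ℝ)..L, s ^ (-α) :=
        integral_mono_on hL (intervalIntegrable_rpow_neg_mul_exp hα ha hL)
          (intervalIntegrable_rpow' hα') fun s hs ↦ rpow_neg_mul_exp_le_rpow_neg ha hs.1
    _ = L ^ (1 - α) / (1 - α) := by
        rw [integral_rpow (Or.inl hα'), zero_rpow (by linarith), sub_zero, neg_add_eq_sub]

lemma rpow_div_le_integral_rpow_neg_mul_exp (hα0 : 0 ≤ α) (hα1 : α < 1)
    (ha : 0 ≤ a) (haL : a ≤ L) (hL : 0 < L) :
    L ^ (1 - α) / (2 * exp (1 / 2)) ≤ ∫ s in (0 : ℝ)..L, s ^ (-α) * exp (-a / (4 * s)) := by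
  have hInt := intervalIntegrable_rpow_neg_mul_exp hα1 ha hL.le
  have hlow : ∀ s ∈ Set.Icc (L / 2) L,
      L ^ (-α) * exp (-(1 / 2)) ≤ s ^ (-α) * exp (-a / (4 * s)) := by
    rintro s ⟨hs1, hs2⟩
    have hs0 : 0 < s := by linarith
    refine mul_le_mul (rpow_le_rpow_of_nonpos hs0 hs2 (by linarith)) (exp_le_exp.2 ?_)
      (exp_nonneg _) (rpow_nonneg hs0.le _)
    rw [neg_div, neg_le_neg_iff, div_le_iff₀ (by positivity)]
    linarith
  calc L ^ (1 - α) / (2 * exp (1 / 2))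
      = (L - L / 2) * (L ^ (-α) * exp (-(1 / 2))) := by
        rw [sub_eq_add_neg, rpow_add hL, rpow_one, exp_neg]
        field_simp
        ring
    _ = ∫ _ in L / 2..L, L ^ (-α) * exp (-(1 / 2)) := by
        rw [intervalIntegral.integral_const, smul_eq_mul]
    _ ≤ ∫ s in L / 2..L, s ^ (-α) * exp (-a / (4 * s)) :=
        integral_mono_on (by linarith) intervalIntegrable_const
          (hInt.mono_set (by rw [Set.uIcc_of_le (by linarith), Set.uIcc_of_le hL.le]
                             exact Set.Icc_subset_Icc (by linarith) le_rfl)) hlow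
    _ ≤ ∫ s in (0 : ℝ)..L, s ^ (-α) * exp (-a / (4 * s)) :=
        integral_mono_interval (by linarith) (by linarith) le_rfl
          ((ae_restrict_iff' measurableSet_Ioc).2 <| Filter.Eventually.of_forall fun s hs ↦
            mul_nonneg (rpow_nonneg hs.1.le _) (exp_nonneg _)) hInt

end HeatKernelTimeIntegral

theorem stmt_14 (α : ℝ) (hα0 : 0 < α) (hα1 : α < 1) :
    ∃ c : ℝ, 1 < c ∧ ∀ t xn : ℝ, 3/4 < t → t < 1 → 0 < xn → xn ^ 2 < 1 - t →
      c⁻¹ * (1 - t) ^ (1 - α) ≤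
        (∫ s in (0:ℝ)..(1 - t), s ^ (-α) * Real.exp (-xn ^ 2 / (4 * s))) ∧
      (∫ s in (0:ℝ)..(1 - t), s ^ (-α) * Real.exp (-xn ^ 2 / (4 * s))) ≤
        c * (1 - t) ^ (1 - α) := by
  have hβ : 0 < 1 - α := by linarith
  have he : 1 < 2 * exp (1 / 2) := by linarith [one_lt_exp_iff.2 (by norm_num : (0 : ℝ) < 1 / 2)]
  refine ⟨2 * exp (1 / 2) / (1 - α), (one_lt_div hβ).2 (by linarith), ?_⟩
  intro t xn _ ht1 _ hxn
  have hL : 0 < 1 - t := by linarith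
  have hpow : 0 ≤ (1 - t) ^ (1 - α) := rpow_nonneg hL.le _
  constructor
  · refine le_trans ?_ (rpow_div_le_integral_rpow_neg_mul_exp hα0.le hα1
      (sq_nonneg xn) hxn.le hL)
    rw [inv_div, div_mul_eq_mul_div, mul_comm]
    exact div_le_div_of_nonneg_right (mul_le_of_le_one_right hpow (by linarith)) (by positivity)
  · refine (integral_rpow_neg_mul_exp_le hα1 (sq_nonneg xn) hL.le).trans ?_
    rw [div_mul_eq_mul_div, div_le_div_iff_of_pos_right hβ]
    exact le_mul_of_one_le_left hpow he.le
end

section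
/- Let n ≥ 2, let Γ'(z', t) = (4πt)^{-(n-1)/2} e^{-|z'|²/(4t)} be the (n-1)-dimensional heat kernel, and let D_{x_n}N(z', x_n) = c_n x_n (|z'|² + x_n²)^{-n/2} (with c_n = 1/(nω_n), n ≥ 3). Let x' ∈ ℝ^{n-1} with |x'| ≥ 1, 0 < x_n < 1/2, t > 0. Then there exist constants c > 1 and δ ∈ (0, 1/4] such that c^{-1} t^{-(n-1)/2} e^{-|x'|²/t} ≤ ∫_{|z'| ≤ |x'|/10} Γ'(x'-z', t) D_{x_n} N(z', x_n) dz' ≤ c t^{-(n-1)/2} e^{-δ |x'|²/t}. -/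
/-!
For `‖z'‖ ≤ ‖x'‖ / 10` the distance `‖x' - z'‖` lies between `9‖x'‖/10` and `11‖x'‖/10`, so the
Gaussian factor of the integrand lies between `exp (-‖x'‖² / t)` and `exp (-‖x'‖² / (5 t))` and can
be taken out of the integral. The substitution `z' = x_n w'` turns the remaining integral of the
Poisson kernel into the integral of `(1 + ‖w'‖²) ^ (-n / 2)` over the ball of radius
`‖x'‖ / (10 x_n) ≥ 1 / 5`, which lies between its integral over the ball of radius `1 / 5` and its
(finite) integral over the whole space.
-/

open Real MeasureTheory Metric Module

section Gaussian

variable {F : Type*} [SeminormedAddCommGroup F] {x z : F} {t : ℝ}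

lemma exp_neg_sq_div_le_exp_neg_norm_sub_sq (ht : 0 < t) (hz : ‖z‖ ≤ ‖x‖ / 10) :
    exp (-‖x‖ ^ 2 / t) ≤ exp (-‖x - z‖ ^ 2 / (4 * t)) := by
  have h : ‖x - z‖ ^ 2 ≤ 4 * ‖x‖ ^ 2 := by
    nlinarith [norm_sub_le x z, norm_nonneg (x - z), norm_nonneg z]
  rw [exp_le_exp, neg_div, neg_div, neg_le_neg_iff, div_le_div_iff₀ (by positivity) ht]
  nlinarith

lemma exp_neg_norm_sub_sq_le (ht : 0 < t) (hz : ‖z‖ ≤ ‖x‖ / 10) :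
    exp (-‖x - z‖ ^ 2 / (4 * t)) ≤ exp (-(1 / 5) * ‖x‖ ^ 2 / t) := by
  have h : 4 / 5 * ‖x‖ ^ 2 ≤ ‖x - z‖ ^ 2 := by
    nlinarith [norm_sub_norm_le x z, norm_nonneg (x - z), norm_nonneg z]
  rw [exp_le_exp, neg_mul, neg_div, neg_div, neg_le_neg_iff, div_le_div_iff₀ ht (by positivity)]
  nlinarith

end Gaussian

section SetIntegral

variable {α : Type*} [MeasurableSpace α] {μ : Measure α} {s : Set α} {f g : α → ℝ} {a b : ℝ}

lemma setIntegral_mul_le_mul_setIntegral (hs : MeasurableSet s)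
    (hfg : IntegrableOn (fun z => f z * g z) s μ) (hg : IntegrableOn g s μ)
    (hg0 : ∀ z ∈ s, 0 ≤ g z) (hf : ∀ z ∈ s, f z ≤ b) :
    ∫ z in s, f z * g z ∂μ ≤ b * ∫ z in s, g z ∂μ := by
  rw [← integral_const_mul]
  exact setIntegral_mono_on hfg (hg.const_mul b) hs
    fun z hz => mul_le_mul_of_nonneg_right (hf z hz) (hg0 z hz)

lemma mul_setIntegral_le_setIntegral_mul (hs : MeasurableSet s)
    (hfg : IntegrableOn (fun z => f z * g z) s μ) (hg : IntegrableOn g s μ)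
    (hg0 : ∀ z ∈ s, 0 ≤ g z) (hf : ∀ z ∈ s, a ≤ f z) :
    a * ∫ z in s, g z ∂μ ≤ ∫ z in s, f z * g z ∂μ := by
  rw [← integral_const_mul]
  exact setIntegral_mono_on (hg.const_mul a) hfg hs
    fun z hz => mul_le_mul_of_nonneg_right (hf z hz) (hg0 z hz)

end SetIntegral

lemma exists_one_lt_inv_le_and_le {a : ℝ} (ha : 0 < a) (b : ℝ) :
    ∃ c : ℝ, 1 < c ∧ c⁻¹ ≤ a ∧ b ≤ c := by
  refine ⟨max b 0 + a⁻¹ + 1, ?_, ?_, ?_⟩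
  · linarith [le_max_right b 0, inv_pos.mpr ha]
  · rw [inv_le_comm₀ (by positivity) ha]
    linarith [le_max_right b 0]
  · linarith [le_max_left b 0, inv_pos.mpr ha]

section PoissonKernel

variable {E : Type*} [NormedAddCommGroup E] [NormedSpace ℝ E] {s : ℝ}

-- `D_{x_n} N(z', x_n)` of the paper, without the factor `1 / (n ω_n)`.
noncomputable def halfSpacePoissonKernel (s : ℝ) (z : E) : ℝ :=
  s * (‖z‖ ^ 2 + s ^ 2) ^ (-((finrank ℝ E : ℝ) + 1) / 2)

lemma halfSpacePoissonKernel_nonneg (hs : 0 ≤ s) (z : E) : 0 ≤ halfSpacePoissonKernel s z := by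
  unfold halfSpacePoissonKernel; positivity

lemma halfSpacePoissonKernel_pos (hs : 0 < s) (z : E) : 0 < halfSpacePoissonKernel s z := by
  unfold halfSpacePoissonKernel; positivity

lemma continuous_halfSpacePoissonKernel (hs : 0 < s) :
    Continuous (halfSpacePoissonKernel (E := E) s) :=
  continuous_const.mul <| (by fun_prop : Continuous fun z : E => ‖z‖ ^ 2 + s ^ 2).rpow_const
    fun _ => Or.inl (by positivity)

lemma halfSpacePoissonKernel_smul {a : ℝ} (ha : 0 < a) (s : ℝ) (z : E) :
    halfSpacePoissonKernel (a * s) (a • z) =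
      (a ^ finrank ℝ E)⁻¹ * halfSpacePoissonKernel s z := by
  have hsq : ‖a • z‖ ^ 2 + (a * s) ^ 2 = a ^ 2 * (‖z‖ ^ 2 + s ^ 2) := by
    rw [norm_smul, Real.norm_of_nonneg ha.le]; ring
  have hpow : (a ^ 2) ^ (-((finrank ℝ E : ℝ) + 1) / 2) = (a ^ (finrank ℝ E + 1))⁻¹ := by
    rw [← Real.rpow_natCast, ← Real.rpow_mul ha.le, ← Real.rpow_natCast, ← Real.rpow_neg ha.le]
    push_cast; ring_nf
  unfold halfSpacePoissonKernel
  rw [hsq, Real.mul_rpow (by positivity) (by positivity), hpow, pow_succ]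
  field_simp

lemma setIntegral_heatKernel_mul_eq [MeasurableSpace E] {μ : Measure E} {x : E} {t N : ℝ}
    (hN : (finrank ℝ E : ℝ) + 1 = N) (ht : 0 < t) (κ s : ℝ) :
    ∫ z in {z : E | ‖z‖ ≤ ‖x‖ / 10}, (4 * π * t) ^ (-(N - 1) / 2) *
        exp (-‖x - z‖ ^ 2 / (4 * t)) * (κ * s * (‖z‖ ^ 2 + s ^ 2) ^ (-N / 2)) ∂μ =
      (4 * π) ^ (-(N - 1) / 2) * κ * t ^ (-(N - 1) / 2) * ∫ z in closedBall 0 (‖x‖ / 10),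
        exp (-‖x - z‖ ^ 2 / (4 * t)) * halfSpacePoissonKernel s z ∂μ := by
  have hball : {z : E | ‖z‖ ≤ ‖x‖ / 10} = closedBall 0 (‖x‖ / 10) := by ext; simp
  rw [hball, ← integral_const_mul, Real.mul_rpow (by positivity) ht.le]
  congr 1 with z
  rw [halfSpacePoissonKernel, hN]
  ring

variable [FiniteDimensional ℝ E] [MeasurableSpace E] [BorelSpace E] {μ : Measure E}
  [μ.IsAddHaarMeasure] {x : E} {t : ℝ}

lemma integrable_halfSpacePoissonKernel_one :
    Integrable (halfSpacePoissonKernel (E := E) 1) μ := by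
  refine (integrable_rpow_neg_one_add_norm_sq (μ := μ) (r := (finrank ℝ E : ℝ) + 1)
    (lt_add_one _)).congr (Filter.Eventually.of_forall fun z => ?_)
  simp [halfSpacePoissonKernel, add_comm]

lemma integrableOn_closedBall_halfSpacePoissonKernel (hs : 0 < s) (r : ℝ) :
    IntegrableOn (halfSpacePoissonKernel s) (closedBall (0 : E) r) μ :=
  (continuous_halfSpacePoissonKernel hs).continuousOn.integrableOn_compact
    (isCompact_closedBall 0 r)

lemma setIntegral_closedBall_halfSpacePoissonKernel (hs : 0 < s) (r : ℝ) :
    ∫ z in closedBall 0 r, halfSpacePoissonKernel s z ∂μ =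
      ∫ w in closedBall 0 (r / s), halfSpacePoissonKernel 1 w ∂μ := by
  have h := μ.setIntegral_comp_smul_of_pos (halfSpacePoissonKernel s)
    (closedBall (0 : E) (r / s)) hs
  rw [smul_closedBall' hs.ne', smul_zero, Real.norm_of_nonneg hs.le,
    mul_div_cancel₀ _ hs.ne'] at h
  have hscale (w : E) : halfSpacePoissonKernel s (s • w) =
      (s ^ finrank ℝ E)⁻¹ * halfSpacePoissonKernel 1 w := by
    simpa using halfSpacePoissonKernel_smul hs 1 w
  simp only [hscale, integral_const_mul, smul_eq_mul] at h
  exact (mul_left_cancel₀ (by positivity) h).symm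

lemma setIntegral_closedBall_halfSpacePoissonKernel_le (hs : 0 < s) (r : ℝ) :
    ∫ z in closedBall 0 r, halfSpacePoissonKernel s z ∂μ ≤
      ∫ w, halfSpacePoissonKernel 1 w ∂μ := by
  rw [setIntegral_closedBall_halfSpacePoissonKernel hs]
  exact setIntegral_le_integral integrable_halfSpacePoissonKernel_one
    (Filter.Eventually.of_forall (halfSpacePoissonKernel_nonneg zero_le_one))

lemma setIntegral_closedBall_halfSpacePoissonKernel_one_le {ρ r : ℝ} (hs : 0 < s)
    (hρ : ρ ≤ r / s) :
    ∫ w in closedBall 0 ρ, halfSpacePoissonKernel 1 w ∂μ ≤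
      ∫ z in closedBall 0 r, halfSpacePoissonKernel s z ∂μ := by
  rw [setIntegral_closedBall_halfSpacePoissonKernel hs]
  exact setIntegral_mono_set integrable_halfSpacePoissonKernel_one.integrableOn
    (Filter.Eventually.of_forall (halfSpacePoissonKernel_nonneg zero_le_one))
    (closedBall_subset_closedBall hρ).eventuallyLE

lemma setIntegral_closedBall_halfSpacePoissonKernel_one_pos {ρ : ℝ} (hρ : 0 < ρ) :
    0 < ∫ w in closedBall (0 : E) ρ, halfSpacePoissonKernel 1 w ∂μ := by
  rw [setIntegral_pos_iff_support_of_nonneg_ae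
    (Filter.Eventually.of_forall (halfSpacePoissonKernel_nonneg zero_le_one))
    integrable_halfSpacePoissonKernel_one.integrableOn,
    Function.support_eq_univ fun w => (halfSpacePoissonKernel_pos one_pos w).ne', Set.univ_inter]
  exact measure_closedBall_pos μ 0 hρ

lemma integrableOn_closedBall_gaussian_mul_halfSpacePoissonKernel (hs : 0 < s) (r : ℝ) :
    IntegrableOn (fun z => exp (-‖x - z‖ ^ 2 / (4 * t)) * halfSpacePoissonKernel s z)
      (closedBall 0 r) μ :=
  ((by fun_prop : Continuous fun z : E => exp (-‖x - z‖ ^ 2 / (4 * t))).mul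
    (continuous_halfSpacePoissonKernel hs)).continuousOn.integrableOn_compact
    (isCompact_closedBall 0 r)

lemma le_setIntegral_gaussian_mul_halfSpacePoissonKernel (ht : 0 < t) (hs : 0 < s)
    (hsx : s ≤ ‖x‖ / 2) :
    exp (-‖x‖ ^ 2 / t) * ∫ w in closedBall 0 (1 / 5), halfSpacePoissonKernel 1 w ∂μ ≤
      ∫ z in closedBall 0 (‖x‖ / 10),
        exp (-‖x - z‖ ^ 2 / (4 * t)) * halfSpacePoissonKernel s z ∂μ := by
  have hρ : (1 / 5 : ℝ) ≤ ‖x‖ / 10 / s := by rw [le_div_iff₀ hs]; linarith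
  calc _ ≤ exp (-‖x‖ ^ 2 / t) *
        ∫ z in closedBall 0 (‖x‖ / 10), halfSpacePoissonKernel s z ∂μ := by
        gcongr
        exact setIntegral_closedBall_halfSpacePoissonKernel_one_le hs hρ
    _ ≤ _ :=
        mul_setIntegral_le_setIntegral_mul measurableSet_closedBall
          (integrableOn_closedBall_gaussian_mul_halfSpacePoissonKernel hs _)
          (integrableOn_closedBall_halfSpacePoissonKernel hs _)
          (fun z _ => halfSpacePoissonKernel_nonneg hs.le z) fun _ hz =>
          exp_neg_sq_div_le_exp_neg_norm_sub_sq ht (mem_closedBall_zero_iff.mp hz)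

lemma setIntegral_gaussian_mul_halfSpacePoissonKernel_le (ht : 0 < t) (hs : 0 < s) :
    ∫ z in closedBall 0 (‖x‖ / 10),
        exp (-‖x - z‖ ^ 2 / (4 * t)) * halfSpacePoissonKernel s z ∂μ ≤
      exp (-(1 / 5) * ‖x‖ ^ 2 / t) * ∫ w, halfSpacePoissonKernel 1 w ∂μ := by
  calc _ ≤ exp (-(1 / 5) * ‖x‖ ^ 2 / t) *
        ∫ z in closedBall 0 (‖x‖ / 10), halfSpacePoissonKernel s z ∂μ :=
        setIntegral_mul_le_mul_setIntegral measurableSet_closedBall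
          (integrableOn_closedBall_gaussian_mul_halfSpacePoissonKernel hs _)
          (integrableOn_closedBall_halfSpacePoissonKernel hs _)
          (fun z _ => halfSpacePoissonKernel_nonneg hs.le z) fun _ hz =>
          exp_neg_norm_sub_sq_le ht (mem_closedBall_zero_iff.mp hz)
    _ ≤ _ := by
        gcongr
        exact setIntegral_closedBall_halfSpacePoissonKernel_le hs _

end PoissonKernel

theorem stmt_18 (n : ℕ) (hn : 2 ≤ n) :
    ∃ c δ : ℝ, 1 < c ∧ 0 < δ ∧ δ ≤ 1/4 ∧
      ∀ (x' : EuclideanSpace ℝ (Fin (n - 1))) (t xn : ℝ),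
        1 ≤ ‖x'‖ → 0 < t → 0 < xn → xn < 1/2 →
        c⁻¹ * (t ^ (-((n : ℝ) - 1) / 2) * Real.exp (-‖x'‖ ^ 2 / t)) ≤
          (∫ z' in {z' : EuclideanSpace ℝ (Fin (n - 1)) | ‖z'‖ ≤ ‖x'‖ / 10},
            (4 * Real.pi * t) ^ (-((n : ℝ) - 1) / 2) *
                Real.exp (-‖x' - z'‖ ^ 2 / (4 * t)) *
              ((1 / ((n : ℝ) * (volume (Metric.ball (0 : EuclideanSpace ℝ (Fin n)) 1)).toReal)) *
                xn * (‖z'‖ ^ 2 + xn ^ 2) ^ (-(n : ℝ) / 2))) ∧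
        (∫ z' in {z' : EuclideanSpace ℝ (Fin (n - 1)) | ‖z'‖ ≤ ‖x'‖ / 10},
            (4 * Real.pi * t) ^ (-((n : ℝ) - 1) / 2) *
                Real.exp (-‖x' - z'‖ ^ 2 / (4 * t)) *
              ((1 / ((n : ℝ) * (volume (Metric.ball (0 : EuclideanSpace ℝ (Fin n)) 1)).toReal)) *
                xn * (‖z'‖ ^ 2 + xn ^ 2) ^ (-(n : ℝ) / 2))) ≤
          c * (t ^ (-((n : ℝ) - 1) / 2) * Real.exp (-δ * ‖x'‖ ^ 2 / t)) := by
  set E := EuclideanSpace ℝ (Fin (n - 1))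
  have hdim : (finrank ℝ E : ℝ) + 1 = n := by
    rw [finrank_euclideanSpace_fin, Nat.cast_sub (by omega)]; push_cast; ring
  set κ := 1 / ((n : ℝ) * (volume (ball (0 : EuclideanSpace ℝ (Fin n)) 1)).toReal)
  have hκ : 0 < κ := one_div_pos.mpr (mul_pos (by positivity)
    (ENNReal.toReal_pos (measure_ball_pos volume _ one_pos).ne' measure_ball_lt_top.ne))
  set A := (4 * π) ^ (-((n : ℝ) - 1) / 2)
  set m := ∫ w in closedBall (0 : E) (1 / 5), halfSpacePoissonKernel 1 w
  set M := ∫ w : E, halfSpacePoissonKernel 1 w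
  have hm : 0 < m := setIntegral_closedBall_halfSpacePoissonKernel_one_pos (by norm_num)
  obtain ⟨c, hc, hcm, hcM⟩ :=
    exists_one_lt_inv_le_and_le (by positivity : 0 < A * κ * m) (A * κ * M)
  refine ⟨c, 1 / 5, hc, by norm_num, by norm_num, fun x t xn hx ht hxn hxn2 => ?_⟩
  rw [setIntegral_heatKernel_mul_eq hdim ht]
  constructor
  · calc c⁻¹ * (t ^ (-((n : ℝ) - 1) / 2) * exp (-‖x‖ ^ 2 / t))
        ≤ A * κ * m * (t ^ (-((n : ℝ) - 1) / 2) * exp (-‖x‖ ^ 2 / t)) := by gcongr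
      _ = A * κ * t ^ (-((n : ℝ) - 1) / 2) * (exp (-‖x‖ ^ 2 / t) * m) := by ring
      _ ≤ _ := by
          gcongr
          exact le_setIntegral_gaussian_mul_halfSpacePoissonKernel ht hxn (by linarith)
  · calc _ ≤ A * κ * t ^ (-((n : ℝ) - 1) / 2) * (exp (-(1 / 5) * ‖x‖ ^ 2 / t) * M) := by
          gcongr
          exact setIntegral_gaussian_mul_halfSpacePoissonKernel_le ht hxn
      _ = A * κ * M * (t ^ (-((n : ℝ) - 1) / 2) * exp (-(1 / 5) * ‖x‖ ^ 2 / t)) := by ring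
      _ ≤ _ := by gcongr
end
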